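/- Let D : ℝ^p ⇉ ℝ^p be locally bounded, nonempty-valued with closed graph, and let (M_i)_{i∈ℕ} be measurable selections of D such that D(x) equals the closure of {M_i(x) : i ∈ ℕ} for every x. Suppose f : ℝ^p → ℝ is such that for every i and every absolutely continuous γ : [0,1] → ℝ^p, f(γ(t)) - f(γ(0)) = ∫₀ᵗ ⟨M_i(γ(s)), γ'(s)⟩ ds for all t ∈ [0,1]. Then D is a conservative gradient for f. -/

import Mathlib

/-!
Along an absolutely continuous curve `γ`, the hypothesis on each selection `Mᵢ` says that
`f ∘ γ` is a primitive of `s ↦ ⟨Mᵢ(γ s), γ' s⟩`, an integrable function since `D` is bounded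
on the compact set `γ([0,1])`. By the Lebesgue differentiation theorem, outside a null set
`Nᵢ` the derivative of `f ∘ γ` at `t` exists and equals `⟨Mᵢ(γ t), γ' t⟩`. Off the countable
union of the `Nᵢ`, the linear functional `⟨·, γ' t⟩` thus takes the single value
`(f ∘ γ)'(t)` on all `Mᵢ(γ t)`, hence on their closure `D(γ t)`.
-/

open MeasureTheory Set

/-- `D` is a conservative gradient for `f : ℝ^p → ℝ`: nonempty-valued, locally
bounded, closed graph, and along every absolutely continuous curve `γ : [0,1] → ℝ^p`,
for almost every `t`, `(f ∘ γ)'(t) = ⟨V, γ'(t)⟩` for all `V ∈ D(γ(t))`. -/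
def IsConservativeGradient {p : ℕ}
    (D : (Fin p → ℝ) → Set (Fin p → ℝ)) (f : (Fin p → ℝ) → ℝ) : Prop :=
  (∀ x, (D x).Nonempty) ∧
  (∀ x : Fin p → ℝ, ∃ ε > (0 : ℝ), ∃ C : ℝ,
    ∀ y, dist y x < ε → ∀ V ∈ D y, ‖V‖ ≤ C) ∧
  IsClosed {q : (Fin p → ℝ) × (Fin p → ℝ) | q.2 ∈ D q.1} ∧
  (∀ γ γ' : ℝ → (Fin p → ℝ),
    IntegrableOn γ' (Icc (0 : ℝ) 1) →
    (∀ t ∈ Icc (0 : ℝ) 1, γ t - γ 0 = ∫ s in (0 : ℝ)..t, γ' s) →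
    ∀ᵐ t ∂(volume.restrict (Icc (0 : ℝ) 1)),
      ∀ V ∈ D (γ t), HasDerivAt (fun s => f (γ s)) (dotProduct V (γ' t)) t)

lemma IsCompact.exists_bound_of_locally_bounded {α E : Type*} [PseudoMetricSpace α] [Norm E]
    {D : α → Set E}
    (hlb : ∀ x, ∃ ε > (0 : ℝ), ∃ C : ℝ, ∀ y, dist y x < ε → ∀ V ∈ D y, ‖V‖ ≤ C)
    {K : Set α} (hK : IsCompact K) : ∃ C, ∀ y ∈ K, ∀ V ∈ D y, ‖V‖ ≤ C := by
  refine hK.induction_on (p := fun s => ∃ C, ∀ y ∈ s, ∀ V ∈ D y, ‖V‖ ≤ C) ⟨0, by simp⟩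
    (fun s t hst ⟨C, hC⟩ => ⟨C, fun y hy => hC y (hst hy)⟩)
    (fun s t ⟨C, hC⟩ ⟨C', hC'⟩ => ⟨max C C', ?_⟩) fun x _ => ?_
  · rintro y (hy | hy) V hV
    exacts [(hC y hy V hV).trans (le_max_left _ _), (hC' y hy V hV).trans (le_max_right _ _)]
  · obtain ⟨ε, hε, C, hC⟩ := hlb x
    exact ⟨Metric.ball x ε, mem_nhdsWithin_of_mem_nhds (Metric.ball_mem_nhds x hε), C, hC⟩

section Primitive

variable {E : Type*} [NormedAddCommGroup E] [NormedSpace ℝ E] {h g : ℝ → E} {a b : ℝ}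

lemma continuousOn_of_sub_eq_integral (hg : IntegrableOn g (Icc a b))
    (hh : ∀ t ∈ Icc a b, h t - h a = ∫ s in a..t, g s) : ContinuousOn h (Icc a b) := by
  rcases le_or_gt a b with hab | hba
  · rw [← uIcc_of_le hab] at hg ⊢
    refine ((continuousOn_const (c := h a)).add
      (intervalIntegral.continuousOn_primitive_interval hg)).congr fun t ht => ?_
    exact eq_add_of_sub_eq' (hh t (uIcc_of_le hab ▸ ht))
  · simp [Icc_eq_empty_of_lt hba]

lemma ae_hasDerivAt_of_sub_eq_integral [CompleteSpace E] (hg : IntegrableOn g (Icc a b))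
    (hh : ∀ t ∈ Icc a b, h t - h a = ∫ s in a..t, g s) :
    ∀ᵐ t ∂volume.restrict (Icc a b), HasDerivAt h (g t) t := by
  rcases le_or_gt a b with hab | hba
  · rw [← Measure.restrict_congr_set Ioo_ae_eq_Icc]
    have hprim := ((intervalIntegrable_iff_integrableOn_Icc_of_le hab).2 hg).ae_hasDerivAt_integral
    rw [uIcc_of_le hab] at hprim
    filter_upwards [ae_restrict_of_ae hprim, ae_restrict_mem measurableSet_Ioo] with t hder ht
    refine ((hder (Ioo_subset_Icc_self ht) a (left_mem_Icc.2 hab)).const_add (h a))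
      |>.congr_of_eventuallyEq ?_
    filter_upwards [Ioo_mem_nhds ht.1 ht.2] with u hu
    exact eq_add_of_sub_eq' (hh u (Ioo_subset_Icc_self hu))
  · simp [Icc_eq_empty_of_lt hba]

end Primitive

lemma Integrable.bdd_dotProduct {α ι : Type*} [MeasurableSpace α] [Fintype ι] {μ : Measure α}
    {v w : α → ι → ℝ} {C : ℝ} (hv : AEStronglyMeasurable v μ) (hvC : ∀ᵐ t ∂μ, ‖v t‖ ≤ C)
    (hw : Integrable w μ) : Integrable (fun t => v t ⬝ᵥ w t) μ :=
  integrable_finsetSum _ fun j _ => (hw.eval j).bdd_mul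
    ((continuous_apply j).comp_aestronglyMeasurable hv)
    (hvC.mono fun _ ht => (norm_le_pi_norm _ j).trans ht)

lemma HasDerivAt.dotProduct_of_mem_closure_range {ι κ : Type*} [Fintype κ] {F : ℝ → ℝ} {t : ℝ}
    {u : ι → κ → ℝ} {w V : κ → ℝ} (hu : ∀ i, HasDerivAt F (u i ⬝ᵥ w) t)
    (hV : V ∈ closure (range u)) : HasDerivAt F (V ⬝ᵥ w) t := by
  obtain ⟨i⟩ : Nonempty ι := range_nonempty_iff_nonempty.1 (closure_nonempty_iff.1 ⟨V, hV⟩)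
  have hclosed : IsClosed {v : κ → ℝ | v ⬝ᵥ w = u i ⬝ᵥ w} :=
    isClosed_eq (continuous_id.dotProduct continuous_const) continuous_const
  have hrange : range u ⊆ {v | v ⬝ᵥ w = u i ⬝ᵥ w} := by
    rintro _ ⟨j, rfl⟩
    exact (hu j).unique (hu i)
  rw [closure_minimal hrange hclosed hV]
  exact hu i

/-- Measurable selections and density: if `D` is locally bounded, nonempty-valued,
with closed graph, `(Mᵢ)` are measurable selections of `D` which are pointwise dense
in `D`, and the fundamental theorem of calculus identity
`f(γ(t)) - f(γ(0)) = ∫₀ᵗ ⟨Mᵢ(γ(s)), γ'(s)⟩ ds` holds along every absolutely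
continuous curve `γ` for every `i`, then `D` is a conservative gradient for `f`. -/
theorem dense_selections_conservative {p : ℕ}
    (D : (Fin p → ℝ) → Set (Fin p → ℝ)) (f : (Fin p → ℝ) → ℝ)
    (M : ℕ → (Fin p → ℝ) → (Fin p → ℝ))
    (hne : ∀ x, (D x).Nonempty)
    (hlb : ∀ x : Fin p → ℝ, ∃ ε > (0 : ℝ), ∃ C : ℝ,
      ∀ y, dist y x < ε → ∀ V ∈ D y, ‖V‖ ≤ C)
    (hclosed : IsClosed {q : (Fin p → ℝ) × (Fin p → ℝ) | q.2 ∈ D q.1})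
    (hMmeas : ∀ i, Measurable (M i))
    (hMsel : ∀ i x, M i x ∈ D x)
    (hMdense : ∀ x, D x = closure {v | ∃ i, M i x = v})
    (hint : ∀ i, ∀ γ γ' : ℝ → (Fin p → ℝ),
      IntegrableOn γ' (Icc (0 : ℝ) 1) →
      (∀ t ∈ Icc (0 : ℝ) 1, γ t - γ 0 = ∫ s in (0 : ℝ)..t, γ' s) →
      ∀ t ∈ Icc (0 : ℝ) 1,
        f (γ t) - f (γ 0) = ∫ s in (0 : ℝ)..t, dotProduct (M i (γ s)) (γ' s)) :
    IsConservativeGradient D f := by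
  refine ⟨hne, hlb, hclosed, fun γ γ' hγ' hγ => ?_⟩
  have hγcont := continuousOn_of_sub_eq_integral hγ' hγ
  obtain ⟨C, hC⟩ := (isCompact_Icc.image_of_continuousOn hγcont).exists_bound_of_locally_bounded hlb
  have hMγ_bdd : ∀ i, ∀ᵐ t ∂volume.restrict (Icc (0 : ℝ) 1), ‖M i (γ t)‖ ≤ C := fun i => by
    filter_upwards [ae_restrict_mem measurableSet_Icc] with t ht
    exact hC _ (mem_image_of_mem γ ht) _ (hMsel i _)
  have hderiv : ∀ i, ∀ᵐ t ∂volume.restrict (Icc (0 : ℝ) 1),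
      HasDerivAt (fun s => f (γ s)) (M i (γ t) ⬝ᵥ γ' t) t := fun i =>
    ae_hasDerivAt_of_sub_eq_integral
      (Integrable.bdd_dotProduct
        ((hMmeas i).comp_aemeasurable (hγcont.aemeasurable measurableSet_Icc)).aestronglyMeasurable
        (hMγ_bdd i) hγ')
      (hint i γ γ' hγ' hγ)
  filter_upwards [ae_all_iff.2 hderiv] with t ht V hV
  exact HasDerivAt.dotProduct_of_mem_closure_range ht (hMdense (γ t) ▸ hV)
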